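/- For every n ≥ 2, every primitive n-th root of unity ζ_n ∈ ℂ, and all w, w' ∈ Ĥ¹, it holds that z_n(w *_q w') = z_n(w) · z_n(w'). -/

import Mathlib

noncomputable section

/-- The coefficient ring `𝒞 = ℚ[ℏ, ℏ⁻¹]`, realized as Laurent polynomials over `ℚ`. -/
abbrev CC : Type := LaurentPolynomial ℚ

/-- The variable `ℏ ∈ 𝒞`. -/
def hb : CC := LaurentPolynomial.T 1

/-- Embedding of rational constants into `𝒞`. -/
def qs (x : ℚ) : CC := algebraMap ℚ CC x

/-- The non-commutative polynomial ring `H = 𝒞⟨a, b⟩`. -/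
abbrev H : Type := FreeAlgebra CC (Fin 2)

/-- The generator `a`. -/
def av : H := FreeAlgebra.ι CC 0

/-- The generator `b`. -/
def bv : H := FreeAlgebra.ι CC 1

/-- `e k` for `k : ℕ`:  `e 0 = e_{1̄} = ab`, and `e (k+1) = e_{k+1} = a^k (a+ℏ) b`. -/
def ev : ℕ → H
  | 0 => av * bv
  | (k+1) => av ^ k * (av + algebraMap CC H hb) * bv

/-- The monomial `e_{k_1} ⋯ e_{k_r}` attached to an index (a list over `N̂`,
with `0` encoding `1̄` and `k+1` encoding the positive integer `k+1`). -/
def eword (l : List ℕ) : H := (l.map ev).prod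

/-- `Ĥ¹`, as the `𝒞`-span of all monomials `e_k` (this coincides with the subalgebra
freely generated by the `e_k`). -/
def H1 : Submodule CC H := Submodule.span CC {x : H | ∃ l : List ℕ, x = eword l}

/-- `Ĥ⁰`, the `𝒞`-span of monomials `e_k` with `k ∈ Î₀` (first entry `≠ 1`). -/
def H0 : Submodule CC H := Submodule.span CC
  {x : H | ∃ l : List ℕ, l.head? ≠ some 1 ∧ x = eword l}

/-- The circle product `∘_q` on the generators. -/
def circ : ℕ → ℕ → H
  | 0, 0 => ev 2 - hb • ev 0
  | 0, (l+1) => ev (l+2)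
  | (k+1), 0 => ev (k+2)
  | (k+1), (l+1) => ev (k+l+2) + hb • ev (k+l+1)

/-- The defining properties of the shuffle product `⧢_q` on `H`. -/
def IsShuffle (sh : H →ₗ[CC] H →ₗ[CC] H) : Prop :=
  (∀ w : H, sh 1 w = w) ∧ (∀ w : H, sh w 1 = w) ∧
  (∀ w w' : H, sh (av * w) (av * w') =
      av * (sh (av * w) w' + sh w (av * w') + hb • sh w w')) ∧
  (∀ w w' : H, sh (bv * w) w' = bv * sh w w') ∧
  (∀ w w' : H, sh w (bv * w') = bv * sh w w')

/-- The defining properties of the stuffle product `*_q` on `Ĥ¹`. -/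
def IsStuffle (st : H →ₗ[CC] H →ₗ[CC] H) : Prop :=
  (∀ w : H, st 1 w = w) ∧ (∀ w : H, st w 1 = w) ∧
  (∀ k l : ℕ, ∀ w w' : H, w ∈ H1 → w' ∈ H1 →
    st (ev k * w) (ev l * w') =
      ev k * st w (ev l * w') + ev l * st (ev k * w) w' + circ k l * st w w')

/-- The q-integer `[m] = (1-q^m)/(1-q)`. -/
def qint (q : ℂ) (m : ℕ) : ℂ := (1 - q ^ m) / (1 - q)

/-- `F_k(m)`:  `F 0 = F_{1̄}` and `F (k+1) = F_{k+1}`. -/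
def Fq (q : ℂ) : ℕ → ℕ → ℂ
  | 0, m => q ^ m / qint q m
  | (k+1), m => q ^ (k * m) / (qint q m) ^ (k + 1)

/-- `ζ_q(k)` for an index `k` (a list over `N̂`): the sum over `m_1 > ⋯ > m_r ≥ 1`. -/
def zetaq (q : ℂ) (l : List ℕ) : ℂ :=
  ∑' m : {f : Fin l.length → ℕ // StrictAnti f ∧ ∀ i, 0 < f i},
    ∏ i : Fin l.length, Fq q (l.get i) (m.1 i)

/-- The defining properties of the `𝒞`-linear map `Z_q` (as a map on all of `H`
extending the one on `Ĥ⁰`): additive, `𝒞`-semilinear along `ρ`, sending `e_k ↦ ζ_q(k)`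
for `k ∈ Î₀`. -/
def IsZq (ρ : CC →ₐ[ℚ] ℂ) (q : ℂ) (Z : H →+ ℂ) : Prop :=
  (∀ c : CC, ∀ w : H, Z (c • w) = ρ c * Z w) ∧
  (∀ l : List ℕ, l.head? ≠ some 1 → Z (eword l) = zetaq q l)


open Classical in
/-- The finite multiple harmonic q-series at a root of unity:
`z_n(k; q) = Σ_{n>m_1>⋯>m_r≥1} Π_j F_{k_j}(m_j)` (for `q` an `n`-th root of unity). -/
def zfin (n : ℕ) (q : ℂ) (l : List ℕ) : ℂ :=
  ∑ f : Fin l.length → Fin n,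
    if (StrictAnti fun i => ((f i : ℕ))) ∧ (∀ i, 0 < ((f i : ℕ))) then
      ∏ i : Fin l.length, Fq q (l.get i) ((f i : ℕ))
    else 0

/-- The defining properties of the `𝒞`-linear map `z_n : Ĥ¹ → ℂ` (extended to `H`):
additive, `𝒞`-semilinear along `ρ`, sending `e_k ↦ z_n(k; ζ_n)` for every index `k`. -/
def IsZn (ρ : CC →ₐ[ℚ] ℂ) (n : ℕ) (q : ℂ) (Z : H →+ ℂ) : Prop :=
  (∀ c : CC, ∀ w : H, Z (c • w) = ρ c * Z w) ∧
  (∀ l : List ℕ, Z (eword l) = zfin n q l)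

/-! Truncate the harmonic sums: `zfin M q l` runs over `M > m₁ > ⋯ > m_r ≥ 1`, so
`zfin M q (k :: l) = ∑_{m < M} F_k(m) · zfin m q l`. Splitting a product of two such sums
according to whether the leading indices satisfy `m > m'`, `m < m'` or `m = m'` reproduces the
stuffle recursion, with `F_k(m) F_l(m)` in the role of `e_k ∘_q e_l`: the two agree under
`ℏ ↦ 1 - q` because `(1 - q)[m] = 1 - q^m`. So the product formula holds at every truncation
level `M` at once, by induction on the words, and `z_n` is the level `M = n`. -/

section Fq

variable (q : ℂ) (m : ℕ)

lemma Fq_zero_right (k : ℕ) : Fq q k 0 = 0 := by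
  cases k <;> simp [Fq, qint]

lemma Fq_of_qint_eq_zero (h : qint q m = 0) (k : ℕ) : Fq q k m = 0 := by
  cases k <;> simp [Fq, h]

lemma one_sub_eq_div_qint (h : qint q m ≠ 0) : 1 - q = (1 - q ^ m) / qint q m := by
  have h1q : 1 - q ≠ 0 := fun h1q => h (by simp [qint, h1q])
  rw [eq_div_iff h, qint, mul_div_cancel₀ _ h1q]

lemma Fq_zero_mul_Fq_zero :
    Fq q 0 m * Fq q 0 m = Fq q 2 m - (1 - q) * Fq q 0 m := by
  by_cases h : qint q m = 0
  · simp [Fq_of_qint_eq_zero q m h]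
  simp only [Fq, one_mul, one_sub_eq_div_qint q m h]
  field_simp
  ring

lemma Fq_zero_mul_Fq_succ (l : ℕ) : Fq q 0 m * Fq q (l + 1) m = Fq q (l + 2) m := by
  by_cases h : qint q m = 0
  · simp [Fq_of_qint_eq_zero q m h]
  simp only [Fq]
  rw [add_mul, one_mul, pow_add]
  field_simp
  ring

lemma Fq_succ_mul_Fq_succ (k l : ℕ) :
    Fq q (k + 1) m * Fq q (l + 1) m = Fq q (k + l + 2) m + (1 - q) * Fq q (k + l + 1) m := by
  by_cases h : qint q m = 0
  · simp [Fq_of_qint_eq_zero q m h]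
  simp only [Fq, one_sub_eq_div_qint q m h]
  rw [show (k + l + 1) * m = k * m + l * m + m by ring, add_mul, pow_add, pow_add, pow_add]
  field_simp
  ring

end Fq

lemma zfin_nil (M : ℕ) (q : ℂ) : zfin M q [] = 1 := by
  simp [zfin, Subsingleton.strictAnti]

open Classical in
def zfinSummand (q : ℂ) (l : List ℕ) (f : Fin l.length → ℕ) : ℂ :=
  if StrictAnti f ∧ ∀ i, 0 < f i then ∏ i, Fq q (l.get i) (f i) else 0

lemma zfin_eq_sum_zfinSummand (M : ℕ) (q : ℂ) (l : List ℕ) :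
    zfin M q l = ∑ f : Fin l.length → Fin M, zfinSummand q l fun i => f i := rfl

lemma strictAnti_cons_and_pos_iff {r m : ℕ} {g : Fin r → ℕ} :
    (StrictAnti (Fin.cons m g : Fin (r + 1) → ℕ) ∧ ∀ i, 0 < (Fin.cons m g : Fin (r + 1) → ℕ) i) ↔
      0 < m ∧ (∀ i, g i < m) ∧ StrictAnti g ∧ ∀ i, 0 < g i := by
  constructor
  · rintro ⟨hanti, hpos⟩
    refine ⟨by simpa using hpos 0, fun i => by simpa using hanti (Fin.succ_pos i),
      fun i j hij => by simpa using hanti (Fin.succ_lt_succ_iff.mpr hij),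
      fun i => by simpa using hpos i.succ⟩
  · rintro ⟨hm, hlt, hanti, hpos⟩
    refine ⟨fun i j hij => ?_, Fin.cases hm hpos⟩
    induction j using Fin.cases with
    | zero => exact absurd hij (Fin.not_lt_zero i)
    | succ j =>
      induction i using Fin.cases with
      | zero => simpa using hlt j
      | succ i => simpa using hanti (Fin.succ_lt_succ_iff.mp hij)

lemma zfinSummand_cons (q : ℂ) (k : ℕ) (l : List ℕ) (m : ℕ) (g : Fin l.length → ℕ) :
    zfinSummand q (k :: l) (Fin.cons m g) =
      if ∀ i, g i < m then Fq q k m * zfinSummand q l g else 0 := by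
  rcases Nat.eq_zero_or_pos m with rfl | hm
  · simp [zfinSummand, strictAnti_cons_and_pos_iff, Fq_zero_right]
  simp only [zfinSummand, strictAnti_cons_and_pos_iff, hm, true_and, Fin.prod_univ_succ,
    Fin.cons_zero, Fin.cons_succ, List.length_cons]
  by_cases hlt : ∀ i, g i < m
  · simp [hlt, mul_ite]
  · simp [hlt]

lemma sum_fin_castLE {r m M : ℕ} (hmM : m ≤ M) (G : (Fin r → ℕ) → ℂ) :
    ∑ g : Fin r → Fin m, G (fun i => g i) =
      ∑ g : Fin r → Fin M, if ∀ i, (g i : ℕ) < m then G (fun i => g i) else 0 := by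
  refine Fintype.sum_of_injective (fun g i => Fin.castLE hmM (g i)) ?_ _ _ ?_ ?_
  · intro g g' h
    funext i
    exact Fin.castLE_injective hmM (congrFun h i)
  · intro g hg
    exact if_neg fun hlt => hg ⟨fun i => ⟨g i, hlt i⟩, rfl⟩
  · intro g
    simp

lemma zfin_cons (M : ℕ) (q : ℂ) (k : ℕ) (l : List ℕ) :
    zfin M q (k :: l) = ∑ m ∈ Finset.range M, Fq q k m * zfin m q l := by
  rw [← Fin.sum_univ_eq_sum_range (fun m => Fq q k m * zfin m q l), zfin_eq_sum_zfinSummand]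
  change ∑ f : Fin (l.length + 1) → Fin M, zfinSummand q (k :: l) (fun i => f i) = _
  rw [← (Fin.consEquiv fun _ => Fin M).sum_comp, Fintype.sum_prod_type]
  refine Finset.sum_congr rfl fun m _ => ?_
  rw [zfin_eq_sum_zfinSummand, Finset.mul_sum,
    sum_fin_castLE m.isLt.le fun g => Fq q k m * zfinSummand q l g]
  refine Finset.sum_congr rfl fun g _ => ?_
  rw [← zfinSummand_cons]
  congr 1
  funext i
  cases i using Fin.cases <;> simp

lemma sum_range_mul_sum_range {R : Type*} [CommSemiring R] (a b : ℕ → R) (M : ℕ) :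
    (∑ m ∈ Finset.range M, a m) * ∑ m ∈ Finset.range M, b m =
      ∑ m ∈ Finset.range M, (a m * ∑ j ∈ Finset.range m, b j +
        b m * ∑ j ∈ Finset.range m, a j + a m * b m) := by
  induction M with
  | zero => simp
  | succ M ih =>
    rw [Finset.sum_range_succ, Finset.sum_range_succ, Finset.sum_range_succ _ M, ← ih]
    ring

lemma eword_nil : eword [] = 1 := rfl

lemma eword_cons (k : ℕ) (l : List ℕ) : eword (k :: l) = ev k * eword l := by
  simp [eword]

/-- `f M` is the value of `x` under `eword l ↦ zfin M q l`, extended along `ρ`. This is a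
relation rather than a map on `H` because the words `eword l` are not shown here to be
linearly independent over `𝒞`. -/
inductive HasTruncations (ρ : CC →ₐ[ℚ] ℂ) (q : ℂ) : H → (ℕ → ℂ) → Prop
  | eword (l : List ℕ) : HasTruncations ρ q (eword l) fun M => zfin M q l
  | add {x y : H} {f g : ℕ → ℂ} :
      HasTruncations ρ q x f → HasTruncations ρ q y g → HasTruncations ρ q (x + y) (f + g)
  | smul (c : CC) {x : H} {f : ℕ → ℂ} :
      HasTruncations ρ q x f → HasTruncations ρ q (c • x) fun M => ρ c * f M

namespace HasTruncations

variable {ρ : CC →ₐ[ℚ] ℂ} {q : ℂ} {x : H} {f : ℕ → ℂ}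

lemma congr_right {g : ℕ → ℂ} (h : HasTruncations ρ q x f) (hfg : f = g) :
    HasTruncations ρ q x g :=
  hfg ▸ h

lemma eval_eq {n : ℕ} {Z : H →+ ℂ} (hZ : IsZn ρ n q Z) (h : HasTruncations ρ q x f) :
    Z x = f n := by
  induction h with
  | eword l => exact hZ.2 l
  | add _ _ ihx ihy => rw [map_add, ihx, ihy, Pi.add_apply]
  | smul c _ ih => rw [hZ.1, ih]

lemma ev_mul (k : ℕ) (h : HasTruncations ρ q x f) :
    HasTruncations ρ q (ev k * x) fun M => ∑ m ∈ Finset.range M, Fq q k m * f m := by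
  induction h with
  | eword l =>
    rw [← eword_cons]
    exact (eword (k :: l)).congr_right (funext fun M => zfin_cons M q k l)
  | add _ _ ihx ihy =>
    rw [mul_add]
    refine (ihx.add ihy).congr_right (funext fun M => ?_)
    simp only [Pi.add_apply, mul_add, Finset.sum_add_distrib]
  | smul c _ ih =>
    rw [mul_smul_comm]
    refine (ih.smul c).congr_right (funext fun M => ?_)
    simp only [Finset.mul_sum, mul_left_comm]

lemma circ_mul (hρ : ρ hb = 1 - q) (k l : ℕ) (h : HasTruncations ρ q x f) :
    HasTruncations ρ q (circ k l * x)
      fun M => ∑ m ∈ Finset.range M, Fq q k m * Fq q l m * f m := by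
  match k, l with
  | 0, 0 =>
    rw [show circ 0 0 * x = ev 2 * x + (-hb) • (ev 0 * x) by
      rw [circ, sub_mul, smul_mul_assoc, sub_eq_add_neg]
      exact congrArg _ (neg_smul hb _).symm]
    refine ((h.ev_mul 2).add ((h.ev_mul 0).smul (-hb))).congr_right (funext fun M => ?_)
    simp only [Pi.add_apply, map_neg, hρ, Finset.mul_sum, ← Finset.sum_add_distrib,
      Fq_zero_mul_Fq_zero]
    exact Finset.sum_congr rfl fun m _ => by ring
  | 0, l + 1 =>
    refine (h.ev_mul (l + 2)).congr_right (funext fun M => ?_)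
    simp only [Fq_zero_mul_Fq_succ]
  | k + 1, 0 =>
    refine (h.ev_mul (k + 2)).congr_right (funext fun M => ?_)
    simp only [mul_comm (Fq q (k + 1) _), Fq_zero_mul_Fq_succ]
  | k + 1, l + 1 =>
    rw [circ, add_mul, smul_mul_assoc]
    refine ((h.ev_mul (k + l + 2)).add ((h.ev_mul (k + l + 1)).smul hb)).congr_right
      (funext fun M => ?_)
    simp only [Pi.add_apply, hρ, Finset.mul_sum, ← Finset.sum_add_distrib, Fq_succ_mul_Fq_succ]
    exact Finset.sum_congr rfl fun m _ => by ring

end HasTruncations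

lemma hasTruncations_stuffle_eword {st : H →ₗ[CC] H →ₗ[CC] H} (hst : IsStuffle st)
    {ρ : CC →ₐ[ℚ] ℂ} {q : ℂ} (hρ : ρ hb = 1 - q) (A B : List ℕ) :
    HasTruncations ρ q (st (eword A) (eword B)) fun M => zfin M q A * zfin M q B := by
  induction A generalizing B with
  | nil =>
    rw [eword_nil, hst.1]
    simpa only [zfin_nil, one_mul] using HasTruncations.eword B
  | cons k A ihA =>
    induction B with
    | nil =>
      rw [eword_nil, hst.2.1]
      simpa only [zfin_nil, mul_one] using HasTruncations.eword (k :: A)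
    | cons k' B ihB =>
      have hmem : ∀ l, eword l ∈ H1 := fun l => Submodule.subset_span ⟨l, rfl⟩
      rw [eword_cons k, eword_cons k', hst.2.2 k k' _ _ (hmem A) (hmem B), ← eword_cons,
        ← eword_cons]
      refine ((((ihA (k' :: B)).ev_mul k).add (ihB.ev_mul k')).add
        ((ihA B).circ_mul hρ k k')).congr_right (funext fun M => ?_)
      simp only [Pi.add_apply, zfin_cons _ q k A, zfin_cons _ q k' B, sum_range_mul_sum_range,
        ← Finset.sum_add_distrib]
      exact Finset.sum_congr rfl fun m _ => by ring

theorem zn_stuffle_general (n : ℕ) (ζ : ℂ)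
    (st : H →ₗ[CC] H →ₗ[CC] H) (hst : IsStuffle st)
    (ρ : CC →ₐ[ℚ] ℂ) (hρ : ρ hb = 1 - ζ)
    (Z : H →+ ℂ) (hZ : IsZn ρ n ζ Z)
    (w w' : H) (hw : w ∈ H1) (hw' : w' ∈ H1) :
    Z (st w w') = Z w * Z w' := by
  induction hw, hw' using Submodule.span_induction₂ with
  | mem_mem x y hx hy =>
    obtain ⟨A, rfl⟩ := hx
    obtain ⟨B, rfl⟩ := hy
    rw [(hasTruncations_stuffle_eword hst hρ A B).eval_eq hZ, hZ.2, hZ.2]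
  | zero_left => simp
  | zero_right => simp
  | add_left x y z _ _ _ hx hy =>
    rw [map_add, LinearMap.add_apply, map_add, map_add, hx, hy, add_mul]
  | add_right x y z _ _ _ hy hz => rw [map_add, map_add, map_add, hy, hz, mul_add]
  | smul_left c x y _ _ h => rw [map_smul, LinearMap.smul_apply, hZ.1, hZ.1, h, mul_assoc]
  | smul_right c x y _ _ h => rw [map_smul, hZ.1, hZ.1, h, mul_left_comm]

/-- For `n ≥ 2`, a primitive `n`-th root of unity `ζ_n`, and
`w, w' ∈ Ĥ¹`, `z_n(w *_q w') = z_n(w) · z_n(w')`. -/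
theorem zn_stuffle (n : ℕ) (hn : 2 ≤ n) (ζ : ℂ) (hζ : IsPrimitiveRoot ζ n)
    (st : H →ₗ[CC] H →ₗ[CC] H) (hst : IsStuffle st)
    (ρ : CC →ₐ[ℚ] ℂ) (hρ : ρ hb = 1 - ζ)
    (Z : H →+ ℂ) (hZ : IsZn ρ n ζ Z)
    (w w' : H) (hw : w ∈ H1) (hw' : w' ∈ H1) :
    Z (st w w') = Z w * Z w' :=
  zn_stuffle_general n ζ st hst ρ hρ Z hZ w w' hw hw'

end
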